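/- Let V be a Poisson vertex algebra which is an algebra of differential polynomials in variables {u_i}, and suppose the λ-bracket on generators {u_i_λ u_j} = H_{ji}(λ) satisfies skew-symmetry on generators: {u_i_λ u_j} + {u_j_{-λ-∂} u_i} = 0 for all i,j. Then the λ-bracket defined on all of V by the Master Formula satisfies skew-symmetry {f_λ g} + {g_{-λ-∂} f} = 0 for all f, g ∈ V. -/

import Mathlib

/-!
Write `S = λ + ∂`, `T = -λ - ∂ = -S`, `N` for the substitution `λ ↦ -λ - ∂`, and `h(S) q` for
`Σ_p h_p S^p q`. Then `N` turns multiplication by `λ` into `T` and `S` into multiplication by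
`-λ`, while the Leibniz rule makes `h ↦ h(S)` commute with `S`. Hence `a S^n H(S) T^m b` equals
`a K(S) b` with `K = S^n ((-λ)^m H)`, and the pairing identity `N (a S^p b) = b T^p a` (induction
on `p`) gives `N (a S^n H(S) T^m b) = b S^m (N H)(S) T^n a`. Only finitely many terms of the
Master Formula are nonzero, so summing this and using `N H_{ij} = -H_{ji}` turns `N {g_λ f}` into
`-{f_λ g}` after exchanging `i ↔ j` and `m ↔ n`.
-/

open Polynomial

section LambdaBracket

variable {F V : Type*} [Field F] [CharZero F] [CommRing V] [Algebra F V]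

/-- Apply a derivation coefficientwise to a `λ`-polynomial. -/
noncomputable def dCoeff (der : V →ₗ[F] V) (p : Polynomial V) : Polynomial V :=
  p.sum fun n c => Polynomial.C (der c) * Polynomial.X ^ n

/-- The operator `λ + ∂` on `λ`-polynomials. -/
noncomputable def opS (der : V →ₗ[F] V) (p : Polynomial V) : Polynomial V :=
  Polynomial.X * p + dCoeff der p

/-- The operator `-λ - ∂` on `λ`-polynomials. -/
noncomputable def opT (der : V →ₗ[F] V) (p : Polynomial V) : Polynomial V :=
  -(Polynomial.X * p) - dCoeff der p

/-- `{f_{-λ-∂} g}` obtained from `{f_λ g} = Σ_n c_n λ^n` as `Σ_n (-λ-∂)^n c_n`. -/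
noncomputable def negSubst (der : V →ₗ[F] V) (p : Polynomial V) : Polynomial V :=
  p.sum fun n c => (opT der)^[n] (Polynomial.C c)

/-- The Master Formula
`{f_λ g} = Σ_{i,j,m,n} (∂g/∂u_j^{(n)}) (λ+∂)^n H_{ji}(λ+∂) (-λ-∂)^m (∂f/∂u_i^{(m)})`. -/
noncomputable def masterFormula {ℓ : ℕ} (der : V →ₗ[F] V)
    (Dp : Fin ℓ → ℕ → (V →ₗ[F] V)) (H : Fin ℓ → Fin ℓ → Polynomial V)
    (f g : V) : Polynomial V :=
  ∑ᶠ (i : Fin ℓ), ∑ᶠ (j : Fin ℓ), ∑ᶠ (m : ℕ), ∑ᶠ (n : ℕ),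
    Polynomial.C (Dp j n g) *
      (opS der)^[n] ((H j i).sum fun p c =>
        Polynomial.C c * (opS der)^[p] ((opT der)^[m] (Polynomial.C (Dp i m f))))

end LambdaBracket

section SkewSymmetry

open Function

variable {F V : Type*} [Field F] [CommRing V] [Algebra F V]

section Linear

variable (der : V →ₗ[F] V)

lemma coeff_dCoeff (p : V[X]) (k : ℕ) : (dCoeff der p).coeff k = der (p.coeff k) := by
  rw [dCoeff, Polynomial.sum, finsetSum_coeff]
  simp only [coeff_C_mul_X_pow, Finset.sum_ite_eq]
  split_ifs with h
  · rfl
  · rw [notMem_support_iff.1 h, map_zero]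

lemma dCoeff_add (p q : V[X]) : dCoeff der (p + q) = dCoeff der p + dCoeff der q := by
  ext k; simp [coeff_dCoeff]

lemma dCoeff_neg (p : V[X]) : dCoeff der (-p) = -dCoeff der p := by
  ext k; simp [coeff_dCoeff]

lemma dCoeff_monomial (n : ℕ) (a : V) : dCoeff der (monomial n a) = monomial n (der a) := by
  ext k; simp only [coeff_dCoeff, coeff_monomial]; split_ifs <;> simp

lemma dCoeff_C (a : V) : dCoeff der (C a) = C (der a) := by
  simpa using dCoeff_monomial der 0 a

lemma dCoeff_X_mul (p : V[X]) : dCoeff der (X * p) = X * dCoeff der p := by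
  ext (_ | k) <;> simp [coeff_dCoeff, coeff_X_mul]

lemma opT_eq_neg_opS (p : V[X]) : opT der p = -opS der p := by
  rw [opT, opS, neg_add]; rfl

lemma opS_add (p q : V[X]) : opS der (p + q) = opS der p + opS der q := by
  simp only [opS, dCoeff_add]; ring

lemma opS_monomial (n : ℕ) (a : V) :
    opS der (monomial n a) = monomial (n + 1) a + monomial n (der a) := by
  rw [opS, dCoeff_monomial, X_mul_monomial]

lemma opT_add (p q : V[X]) : opT der (p + q) = opT der p + opT der q := by
  simp only [opT_eq_neg_opS, opS_add, neg_add]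

lemma commute_dCoeff_opT : Function.Commute (dCoeff der) (opT der) := by
  intro p
  simp only [opT, sub_eq_add_neg, dCoeff_add, dCoeff_neg, dCoeff_X_mul]

noncomputable def opSHom : V[X] →+ V[X] := AddMonoidHom.mk' (opS der) (opS_add der)

noncomputable def opTHom : V[X] →+ V[X] := AddMonoidHom.mk' (opT der) (opT_add der)

lemma iterate_opS_neg (n : ℕ) (p : V[X]) : (opS der)^[n] (-p) = -(opS der)^[n] p :=
  iterate_map_neg (opSHom der) n p

lemma iterate_opS_zero (n : ℕ) : (opS der)^[n] (0 : V[X]) = 0 :=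
  iterate_map_zero (opSHom der) n

lemma iterate_opT_add (n : ℕ) (p q : V[X]) :
    (opT der)^[n] (p + q) = (opT der)^[n] p + (opT der)^[n] q :=
  iterate_map_add (opTHom der) n p q

lemma iterate_opT_zero (n : ℕ) : (opT der)^[n] (0 : V[X]) = 0 :=
  iterate_map_zero (opTHom der) n

lemma negSubst_monomial (n : ℕ) (a : V) :
    negSubst der (monomial n a) = (opT der)^[n] (C a) := by
  rw [negSubst, sum_monomial_index]
  rw [C_0, iterate_opT_zero]

lemma negSubst_C (a : V) : negSubst der (C a) = C a := by
  simpa using negSubst_monomial der 0 a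

lemma negSubst_add (p q : V[X]) : negSubst der (p + q) = negSubst der p + negSubst der q := by
  rw [negSubst, negSubst, negSubst, sum_add_index]
  · intro n; rw [C_0, iterate_opT_zero]
  · intro n a b; rw [C_add, iterate_opT_add]

noncomputable def negSubstHom : V[X] →+ V[X] := AddMonoidHom.mk' (negSubst der) (negSubst_add der)

lemma negSubst_neg (p : V[X]) : negSubst der (-p) = -negSubst der p :=
  map_neg (negSubstHom der) p

lemma negSubst_sum {ι : Type*} (s : Finset ι) (f : ι → V[X]) :
    negSubst der (∑ x ∈ s, f x) = ∑ x ∈ s, negSubst der (f x) :=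
  map_sum (negSubstHom der) f s

lemma negSubst_X_mul (p : V[X]) : negSubst der (X * p) = opT der (negSubst der p) := by
  induction p using Polynomial.induction_on' with
  | add p q hp hq => rw [mul_add, negSubst_add, hp, hq, negSubst_add, opT_add]
  | monomial n a =>
    rw [X_mul_monomial, negSubst_monomial, negSubst_monomial, iterate_succ_apply']

lemma negSubst_opS (p : V[X]) : negSubst der (opS der p) = -(X * negSubst der p) := by
  induction p using Polynomial.induction_on' with
  | add p q hp hq => rw [opS_add, negSubst_add, hp, hq, negSubst_add]; ring
  | monomial n a =>
    rw [opS_monomial, negSubst_add, negSubst_monomial, negSubst_monomial, negSubst_monomial,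
      iterate_succ_apply', ← dCoeff_C, ← (commute_dCoeff_opT der).iterate_right n, opT]
    ring

lemma negSubst_iterate_opS (n : ℕ) (p : V[X]) :
    negSubst der ((opS der)^[n] p) = (-X) ^ n * negSubst der p := by
  induction n with
  | zero => simp
  | succ n ih => rw [iterate_succ_apply', negSubst_opS, ih]; ring

lemma negSubst_neg_X_pow_mul (m : ℕ) (p : V[X]) :
    negSubst der ((-X) ^ m * p) = (opS der)^[m] (negSubst der p) := by
  induction m with
  | zero => simp
  | succ m ih =>
    rw [pow_succ', mul_assoc, neg_mul, negSubst_neg, negSubst_X_mul, ih, iterate_succ_apply',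
      opT_eq_neg_opS, neg_neg]

/-- `h(λ + ∂) q`, with the coefficients of `h` on the left; the inner sum of `masterFormula`. -/
noncomputable def evalOpS (h q : V[X]) : V[X] :=
  h.sum fun p c => C c * (opS der)^[p] q

lemma evalOpS_monomial (p : ℕ) (c : V) (q : V[X]) :
    evalOpS der (monomial p c) q = C c * (opS der)^[p] q := by
  rw [evalOpS, sum_monomial_index]
  rw [C_0, zero_mul]

lemma evalOpS_C (c : V) (q : V[X]) : evalOpS der (C c) q = C c * q := by
  simpa using evalOpS_monomial der 0 c q

lemma evalOpS_add_left (h h' q : V[X]) :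
    evalOpS der (h + h') q = evalOpS der h q + evalOpS der h' q := by
  rw [evalOpS, evalOpS, evalOpS, sum_add_index]
  · intro n; rw [C_0, zero_mul]
  · intro n a b; rw [C_add, add_mul]

lemma evalOpS_neg_left (h q : V[X]) : evalOpS der (-h) q = -evalOpS der h q := by
  rw [eq_neg_iff_add_eq_zero, ← evalOpS_add_left, neg_add_cancel, evalOpS, sum_zero_index]

lemma evalOpS_neg_right (h q : V[X]) : evalOpS der h (-q) = -evalOpS der h q := by
  simp only [evalOpS, Polynomial.sum, iterate_opS_neg, mul_neg, Finset.sum_neg_distrib]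

lemma evalOpS_zero_right (h : V[X]) : evalOpS der h 0 = 0 := by
  simp only [evalOpS, Polynomial.sum, iterate_opS_zero, mul_zero, Finset.sum_const_zero]

lemma evalOpS_X_mul_left (h q : V[X]) : evalOpS der (X * h) q = evalOpS der h (opS der q) := by
  induction h using Polynomial.induction_on' with
  | add p r hp hr => rw [mul_add, evalOpS_add_left, hp, hr, evalOpS_add_left]
  | monomial n a => rw [X_mul_monomial, evalOpS_monomial, evalOpS_monomial, iterate_succ_apply]

lemma evalOpS_iterate_opT_right (m : ℕ) (h q : V[X]) :
    evalOpS der h ((opT der)^[m] q) = evalOpS der ((-X) ^ m * h) q := by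
  induction m generalizing q with
  | zero => simp
  | succ m ih =>
    rw [iterate_succ_apply, ih, opT_eq_neg_opS, evalOpS_neg_right, ← evalOpS_X_mul_left,
      ← evalOpS_neg_left]
    congr 1
    ring

end Linear

section MasterFormula

variable (der : V →ₗ[F] V) {ℓ : ℕ} (Dp : Fin ℓ → ℕ → (V →ₗ[F] V)) (H : Fin ℓ → Fin ℓ → V[X])

lemma masterFormula_eq_sum (f g : V) (s : Finset ℕ) (hf : ∀ i m, m ∉ s → Dp i m f = 0)
    (hg : ∀ j n, n ∉ s → Dp j n g = 0) :
    masterFormula der Dp H f g = ∑ i, ∑ j, ∑ m ∈ s, ∑ n ∈ s,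
      C (Dp j n g) * (opS der)^[n] (evalOpS der (H j i) ((opT der)^[m] (C (Dp i m f)))) := by
  change ∑ᶠ i, ∑ᶠ j, ∑ᶠ m, ∑ᶠ n,
    C (Dp j n g) * (opS der)^[n] (evalOpS der (H j i) ((opT der)^[m] (C (Dp i m f)))) = _
  simp only [finsum_eq_sum_of_fintype]
  refine Finset.sum_congr rfl fun i _ => Finset.sum_congr rfl fun j _ => ?_
  rw [finsum_eq_finsetSum_of_support_subset (s := s)]
  · refine Finset.sum_congr rfl fun m _ => finsum_eq_finsetSum_of_support_subset _ ?_
    intro n hn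
    by_contra hns
    exact hn (by simp only [hg j n hns, C_0, zero_mul])
  · intro m hm
    by_contra hms
    refine hm (finsum_eq_zero_of_forall_eq_zero fun n => ?_)
    rw [hf i m hms, C_0, iterate_opT_zero, evalOpS_zero_right, iterate_opS_zero, mul_zero]

end MasterFormula

section Derivation

variable (D : Derivation F V V)

local notation "δ" => (D : V →ₗ[F] V)

lemma dCoeff_C_mul (a : V) (p : V[X]) :
    dCoeff δ (C a * p) = C (D a) * p + C a * dCoeff δ p := by
  ext k
  simp only [coeff_dCoeff, coeff_C_mul, coeff_add, Derivation.coeFn_coe, Derivation.leibniz,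
    smul_eq_mul]
  ring

lemma opS_C_mul (a : V) (p : V[X]) : opS δ (C a * p) = C a * opS δ p + C (D a) * p := by
  rw [opS, opS, dCoeff_C_mul]; ring

lemma evalOpS_opS_left (h q : V[X]) : evalOpS δ (opS δ h) q = opS δ (evalOpS δ h q) := by
  induction h using Polynomial.induction_on' with
  | add p r hp hr => rw [opS_add, evalOpS_add_left, hp, hr, evalOpS_add_left, opS_add]
  | monomial n a =>
    rw [opS_monomial, evalOpS_add_left, evalOpS_monomial, evalOpS_monomial, evalOpS_monomial,
      opS_C_mul, iterate_succ_apply']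
    rfl

lemma evalOpS_iterate_opS_left (n : ℕ) (h q : V[X]) :
    evalOpS δ ((opS δ)^[n] h) q = (opS δ)^[n] (evalOpS δ h q) :=
  Semiconj.iterate_right (f := fun h => evalOpS δ h q) (fun h => evalOpS_opS_left D h q) n h

lemma evalOpS_iterate_opT_left (n : ℕ) (h q : V[X]) :
    evalOpS δ ((opT δ)^[n] h) q = (opT δ)^[n] (evalOpS δ h q) :=
  Semiconj.iterate_right (f := fun h => evalOpS δ h q)
    (fun h => by simp only [opT_eq_neg_opS, evalOpS_neg_left, evalOpS_opS_left]) n h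

lemma negSubst_C_mul_iterate_opS_C (p : ℕ) (a b : V) :
    negSubst δ (C a * (opS δ)^[p] (C b)) = C b * (opT δ)^[p] (C a) := by
  induction p generalizing a with
  | zero => rw [iterate_zero_apply, iterate_zero_apply, ← C_mul, negSubst_C, ← C_mul, mul_comm]
  | succ p ih =>
    have hS : C a * (opS δ)^[p + 1] (C b)
        = opS δ (C a * (opS δ)^[p] (C b)) - C (D a) * (opS δ)^[p] (C b) := by
      rw [iterate_succ_apply', opS_C_mul]; ring
    have hT : (opT δ)^[p + 1] (C a) = -(X * (opT δ)^[p] (C a)) - (opT δ)^[p] (C (D a)) := by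
      rw [iterate_succ_apply', opT, (commute_dCoeff_opT δ).iterate_right p (C a), dCoeff_C]
      rfl
    rw [hS, hT, sub_eq_add_neg, negSubst_add, negSubst_neg, negSubst_opS, ih, ih]
    ring

lemma negSubst_C_mul_evalOpS_C (h : V[X]) (a b : V) :
    negSubst δ (C a * evalOpS δ h (C b)) = C b * evalOpS δ (negSubst δ h) (C a) := by
  induction h using Polynomial.induction_on' with
  | add p r hp hr =>
    rw [evalOpS_add_left, mul_add, negSubst_add, hp, hr, negSubst_add, evalOpS_add_left, mul_add]
  | monomial p c =>
    rw [evalOpS_monomial, ← mul_assoc, ← C_mul, negSubst_C_mul_iterate_opS_C, negSubst_monomial,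
      evalOpS_iterate_opT_left, evalOpS_C, ← C_mul, mul_comm c]

lemma negSubst_C_mul_iterate_opS_evalOpS (m n : ℕ) (h : V[X]) (a b : V) :
    negSubst δ (C a * (opS δ)^[n] (evalOpS δ h ((opT δ)^[m] (C b))))
      = C b * (opS δ)^[m] (evalOpS δ (negSubst δ h) ((opT δ)^[n] (C a))) := by
  calc negSubst δ (C a * (opS δ)^[n] (evalOpS δ h ((opT δ)^[m] (C b))))
      = negSubst δ (C a * evalOpS δ ((opS δ)^[n] ((-X) ^ m * h)) (C b)) := by
        rw [evalOpS_iterate_opT_right, evalOpS_iterate_opS_left]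
    _ = C b * evalOpS δ ((-X) ^ n * (opS δ)^[m] (negSubst δ h)) (C a) := by
        rw [negSubst_C_mul_evalOpS_C, negSubst_iterate_opS, negSubst_neg_X_pow_mul]
    _ = C b * (opS δ)^[m] (evalOpS δ (negSubst δ h) ((opT δ)^[n] (C a))) := by
        rw [← evalOpS_iterate_opT_right, evalOpS_iterate_opS_left]

theorem masterFormula_add_negSubst_eq_zero {ℓ : ℕ} (Dp : Fin ℓ → ℕ → (V →ₗ[F] V))
    (H : Fin ℓ → Fin ℓ → V[X]) (hskew : ∀ i j, H j i + negSubst δ (H i j) = 0) (f g : V)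
    (s : Finset ℕ) (hf : ∀ i m, m ∉ s → Dp i m f = 0) (hg : ∀ j n, n ∉ s → Dp j n g = 0) :
    masterFormula δ Dp H f g + negSubst δ (masterFormula δ Dp H g f) = 0 := by
  have hH : ∀ i j, negSubst δ (H i j) = -H j i := fun i j =>
    eq_neg_of_add_eq_zero_right (hskew i j)
  rw [masterFormula_eq_sum δ Dp H f g s hf hg, masterFormula_eq_sum δ Dp H g f s hg hf]
  simp only [negSubst_sum, negSubst_C_mul_iterate_opS_evalOpS, hH, evalOpS_neg_left,
    iterate_opS_neg, mul_neg, Finset.sum_neg_distrib]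
  rw [add_neg_eq_zero, Finset.sum_comm]
  exact Finset.sum_congr rfl fun j _ => Finset.sum_congr rfl fun i _ => Finset.sum_comm

end Derivation

end SkewSymmetry

theorem master_formula_skew_symmetry_general
    (F : Type*) [Field F] (ℓ : ℕ)
    (der : MvPolynomial (Fin ℓ × ℕ) F →ₗ[F] MvPolynomial (Fin ℓ × ℕ) F)
    (hder : der = (MvPolynomial.mkDerivation F
      (fun p : Fin ℓ × ℕ => MvPolynomial.X (p.1, p.2 + 1))).toLinearMap)
    (Dp : Fin ℓ → ℕ → (MvPolynomial (Fin ℓ × ℕ) F →ₗ[F] MvPolynomial (Fin ℓ × ℕ) F))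
    (hDp : ∀ i n, Dp i n = (MvPolynomial.pderiv (i, n)).toLinearMap)
    (H : Fin ℓ → Fin ℓ → Polynomial (MvPolynomial (Fin ℓ × ℕ) F))
    (hskewgen : ∀ i j : Fin ℓ, H j i + negSubst der (H i j) = 0) :
    ∀ f g : MvPolynomial (Fin ℓ × ℕ) F,
      masterFormula der Dp H f g + negSubst der (masterFormula der Dp H g f) = 0 := by
  intro f g
  subst hder
  set s := (f.vars ∪ g.vars).image Prod.snd
  have hf : ∀ i m, m ∉ s → Dp i m f = 0 := fun i m hm => by
    rw [hDp]
    exact MvPolynomial.pderiv_eq_zero_of_notMem_vars fun hv =>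
      hm (Finset.mem_image_of_mem _ (Finset.mem_union_left _ hv))
  have hg : ∀ j n, n ∉ s → Dp j n g = 0 := fun j n hn => by
    rw [hDp]
    exact MvPolynomial.pderiv_eq_zero_of_notMem_vars fun hv =>
      hn (Finset.mem_image_of_mem _ (Finset.mem_union_right _ hv))
  exact masterFormula_add_negSubst_eq_zero _ Dp H hskewgen f g s hf hg

/-- On the algebra of differential polynomials
`V = F[u_i^{(n)}]`, if the `λ`-bracket on generators `{u_i λ u_j} = H_{ji}(λ)`
satisfies skew-symmetry on generators, then the `λ`-bracket defined on all of
`V` by the Master Formula is skew-symmetric: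
`{f_λ g} + {g_{-λ-∂} f} = 0` for all `f, g ∈ V`. -/
theorem master_formula_skew_symmetry
    (F : Type*) [Field F] [CharZero F] (ℓ : ℕ)
    (der : MvPolynomial (Fin ℓ × ℕ) F →ₗ[F] MvPolynomial (Fin ℓ × ℕ) F)
    (hder : der = (MvPolynomial.mkDerivation F
      (fun p : Fin ℓ × ℕ => MvPolynomial.X (p.1, p.2 + 1))).toLinearMap)
    (Dp : Fin ℓ → ℕ → (MvPolynomial (Fin ℓ × ℕ) F →ₗ[F] MvPolynomial (Fin ℓ × ℕ) F))
    (hDp : ∀ i n, Dp i n = (MvPolynomial.pderiv (i, n)).toLinearMap)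
    (H : Fin ℓ → Fin ℓ → Polynomial (MvPolynomial (Fin ℓ × ℕ) F))
    (hskewgen : ∀ i j : Fin ℓ, H j i + negSubst der (H i j) = 0) :
    ∀ f g : MvPolynomial (Fin ℓ × ℕ) F,
      masterFormula der Dp H f g + negSubst der (masterFormula der Dp H g f) = 0 :=
  master_formula_skew_symmetry_general F ℓ der hder Dp hDp H hskewgen
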